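/- arXiv:2111.09744 — 3 statements merged into one kernel-verified Lean document; each statement's English description precedes it below -/
import Mathlib

section
/- With the notation of the covered information theorem: for a factorized positive distribution p on (X₁,...,X_N, Y), with clique sets A = {c : i ∈ c} and B = {c : i ∉ c}, the identity H(X_i ∪ Y ∪ X_{i⁻}) - H(X_{i⁻} ∪ Y) = -∑_x p(x) log( ∏_{a∈A} ψ_a(x_a) / ∑_{x_i} ∏_{a∈A} ψ_a(x_a) ) holds, where H denotes joint Shannon entropy of the listed variables. -/
/-- for a positive factorized distribution over (X₁,...,X_N, Y)
(here all N+1 variables are indexed uniformly, with `i` the distinguished one),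
with A = {cliques containing i}, one has
`H(X_i ∪ Y ∪ X_{i⁻}) - H(X_{i⁻} ∪ Y)
   = -∑_x p(x) log( ∏_{a∈A} ψ_a(x_a) / ∑_{x_i} ∏_{a∈A} ψ_a(x_a) )`.
The entropy of the marginal with `X i` summed out is expressed as
`-∑_x p(x) log(∑_{a} p(x with x_i := a))`, which equals the marginal entropy. -/
theorem covered_info_step_one_two
    {M : ℕ} {S : Fin M → Type*} [∀ v, Fintype (S v)] [∀ v, DecidableEq (S v)]
    {C : Type*} [Fintype C]
    (K : C → Finset (Fin M))
    (ψ : C → (∀ v, S v) → ℝ)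
    (hψpos : ∀ c x, 0 < ψ c x)
    (hψdep : ∀ c x y, (∀ v ∈ K c, x v = y v) → ψ c x = ψ c y)
    (Z : ℝ) (hZ : Z = ∑ x : ∀ v, S v, ∏ c, ψ c x)
    (p : (∀ v, S v) → ℝ)
    (hfact : ∀ x, p x = (∏ c, ψ c x) / Z)
    (i : Fin M) :
    (-∑ x, p x * Real.log (p x))
      - (-∑ x, p x * Real.log (∑ a : S i, p (Function.update x i a)))
    = -∑ x, p x *
        Real.log ((∏ c ∈ Finset.univ.filter (fun c => i ∈ K c), ψ c x) /
          (∑ a : S i, ∏ c ∈ Finset.univ.filter (fun c => i ∈ K c),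
            ψ c (Function.update x i a))) := by
  classical
  by_cases hne : Nonempty (∀ v, S v)
  · have hZpos : 0 < Z := by
      rw [hZ]
      exact Finset.sum_pos (fun x _ => Finset.prod_pos fun c _ => hψpos c x)
        (Finset.univ_nonempty)
    set A : Finset C := Finset.univ.filter (fun c => i ∈ K c) with hA
    have key : ∀ x : ∀ v, S v,
        p x * Real.log (p x)
          - p x * Real.log (∑ a : S i, p (Function.update x i a))
        = p x * Real.log ((∏ c ∈ A, ψ c x) /
            (∑ a : S i, ∏ c ∈ A, ψ c (Function.update x i a))) := by
      intro x
      have hprodA : 0 < ∏ c ∈ A, ψ c x := Finset.prod_pos fun c _ => hψpos c x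
      have hprodB : 0 < ∏ c ∈ Aᶜ, ψ c x := Finset.prod_pos fun c _ => hψpos c x
      have hSnon : (Finset.univ : Finset (S i)).Nonempty := ⟨x i, Finset.mem_univ _⟩
      have hSumA : 0 < ∑ a : S i, ∏ c ∈ A, ψ c (Function.update x i a) :=
        Finset.sum_pos (fun a _ => Finset.prod_pos fun c _ => hψpos c _) hSnon
      -- express p x
      have hsplit : ∀ a : S i, ∏ c, ψ c (Function.update x i a)
          = (∏ c ∈ A, ψ c (Function.update x i a)) * ∏ c ∈ Aᶜ, ψ c x := by
        intro a
        rw [← Finset.prod_mul_prod_compl A (fun c => ψ c (Function.update x i a))]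
        congr 1
        apply Finset.prod_congr rfl
        intro c hc
        apply hψdep
        intro v hv
        have : v ≠ i := by
          rintro rfl
          simp only [hA, Finset.mem_compl, Finset.mem_filter, Finset.mem_univ,
            true_and] at hc
          exact hc hv
        exact Function.update_of_ne this _ _
      have hpx : p x = ((∏ c ∈ A, ψ c x) * ∏ c ∈ Aᶜ, ψ c x) / Z := by
        rw [hfact, ← Finset.prod_mul_prod_compl A (fun c => ψ c x)]
      have hmarg : (∑ a : S i, p (Function.update x i a))
          = ((∑ a : S i, ∏ c ∈ A, ψ c (Function.update x i a)) * ∏ c ∈ Aᶜ, ψ c x) / Z := by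
        rw [Finset.sum_mul, Finset.sum_div]
        apply Finset.sum_congr rfl
        intro a _
        rw [hfact, hsplit a]
      have hAx : ∏ c ∈ A, ψ c x = ∏ c ∈ A, ψ c (Function.update x i (x i)) := by
        simp
      have hlog1 : Real.log (p x)
          = Real.log (∏ c ∈ A, ψ c x) + Real.log (∏ c ∈ Aᶜ, ψ c x) - Real.log Z := by
        rw [hpx, Real.log_div (by positivity) (ne_of_gt hZpos),
          Real.log_mul (ne_of_gt hprodA) (ne_of_gt hprodB)]
      have hlog2 : Real.log (∑ a : S i, p (Function.update x i a))
          = Real.log (∑ a : S i, ∏ c ∈ A, ψ c (Function.update x i a))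
            + Real.log (∏ c ∈ Aᶜ, ψ c x) - Real.log Z := by
        rw [hmarg, Real.log_div (by positivity) (ne_of_gt hZpos),
          Real.log_mul (ne_of_gt hSumA) (ne_of_gt hprodB)]
      rw [hlog1, hlog2, Real.log_div (ne_of_gt hprodA) (ne_of_gt hSumA)]
      ring
    have h : ∑ x : ∀ v, S v,
        (p x * Real.log (p x)
          - p x * Real.log (∑ a : S i, p (Function.update x i a)))
        = ∑ x : ∀ v, S v, p x * Real.log ((∏ c ∈ A, ψ c x) /
            (∑ a : S i, ∏ c ∈ A, ψ c (Function.update x i a))) :=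
      Finset.sum_congr rfl fun x _ => key x
    rw [Finset.sum_sub_distrib] at h
    linarith
  · haveI := not_nonempty_iff.mp hne
    simp
end

section
/- With clique sets C = {c : i∉c, y∉c}, D = {c : i∈c, y∉c}, E = {c : i∉c, y∈c}, F = {c : i∈c, y∈c} of a positive factorized distribution p(x, y) = (1/Z)∏_c ψ_c, and writing d(x_i) = ∏_{c∈D} ψ_c, e(y) = ∏_{c∈E} ψ_c, f(x_i,y) = ∏_{c∈F} ψ_c (with the other coordinates fixed at their observed values), the identity H(X_{i⁻}) - H(X_i ∪ X_{i⁻}) = -∑_{x} p(x) log( ∑_{x_i'}∑_{y'} d(x_i')e(y')f(x_i',y') / ∑_{y'} d(x_i)e(y')f(x_i,y') ) holds. -/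
/-- for a positive factorized distribution over the variables
(X₁,...,X_N, Y), indexed uniformly with `i` the distinguished X-index and `y`
the index of Y, with clique sets D = {c : i∈c, y∉c}, E = {c : i∉c, y∈c},
F = {c : i∈c, y∈c} and `d, e, f` the corresponding products of potentials (the
remaining coordinates fixed at their observed values),
`H(X_{i⁻}) - H(X_i ∪ X_{i⁻})
  = -∑_x p(x) log( ∑_{x_i'}∑_{y'} d(x_i')e(y')f(x_i',y')
                    / ∑_{y'} d(x_i)e(y')f(x_i,y') )`.
Marginal entropies are expressed via sums over updates. -/
theorem covered_info_step_three_four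
    {M : ℕ} {S : Fin M → Type*} [∀ v, Fintype (S v)] [∀ v, DecidableEq (S v)]
    {C : Type*} [Fintype C]
    (K : C → Finset (Fin M))
    (ψ : C → (∀ v, S v) → ℝ)
    (hψpos : ∀ c x, 0 < ψ c x)
    (hψdep : ∀ c x z, (∀ v ∈ K c, x v = z v) → ψ c x = ψ c z)
    (Z : ℝ) (hZ : Z = ∑ x : ∀ v, S v, ∏ c, ψ c x)
    (p : (∀ v, S v) → ℝ)
    (hfact : ∀ x, p x = (∏ c, ψ c x) / Z)
    (i y : Fin M) (hiy : i ≠ y)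
    -- d, e, f : products of the potentials in D, E, F with the other coordinates
    -- fixed at the observed configuration x
    (d : (∀ v, S v) → S i → ℝ) (e : (∀ v, S v) → S y → ℝ)
    (f : (∀ v, S v) → S i → S y → ℝ)
    (hd : ∀ x a, d x a =
      ∏ c ∈ Finset.univ.filter (fun c => i ∈ K c ∧ y ∉ K c), ψ c (Function.update x i a))
    (he : ∀ x b, e x b =
      ∏ c ∈ Finset.univ.filter (fun c => i ∉ K c ∧ y ∈ K c), ψ c (Function.update x y b))
    (hf : ∀ x a b, f x a b =
      ∏ c ∈ Finset.univ.filter (fun c => i ∈ K c ∧ y ∈ K c),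
        ψ c (Function.update (Function.update x i a) y b)) :
    (-∑ x, p x * Real.log (∑ a : S i, ∑ b : S y,
        p (Function.update (Function.update x i a) y b)))
      - (-∑ x, p x * Real.log (∑ b : S y, p (Function.update x y b)))
    = -∑ x, p x * Real.log
        ((∑ a : S i, ∑ b : S y, d x a * e x b * f x a b) /
          (∑ b : S y, d x (x i) * e x b * f x (x i) b)) := by

  classical
  rcases isEmpty_or_nonempty (∀ v, S v) with hemp | hne
  · simp
  · have x0 : ∀ v, S v := hne.some
    have hSi : Nonempty (S i) := ⟨x0 i⟩
    have hSy : Nonempty (S y) := ⟨x0 y⟩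
    set g : (∀ v, S v) → ℝ :=
      fun x => ∏ c ∈ Finset.univ.filter (fun c => i ∉ K c ∧ y ∉ K c), ψ c x with hg
    have key : ∀ (x : ∀ v, S v) (a : S i) (b : S y),
        (∏ c, ψ c (Function.update (Function.update x i a) y b))
          = g x * (d x a * (e x b * f x a b)) := by
      intro x a b
      rw [hd, he, hf, hg]
      rw [← Finset.prod_filter_mul_prod_filter_not Finset.univ (fun c => i ∈ K c)
          (fun c => ψ c (Function.update (Function.update x i a) y b))]
      rw [← Finset.prod_filter_mul_prod_filter_not
          (Finset.univ.filter (fun c => i ∈ K c)) (fun c => y ∈ K c)]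
      rw [← Finset.prod_filter_mul_prod_filter_not
          (Finset.univ.filter (fun c => ¬ i ∈ K c)) (fun c => y ∈ K c)]
      rw [Finset.filter_filter, Finset.filter_filter, Finset.filter_filter,
        Finset.filter_filter]
      have hP2 : ∏ c ∈ Finset.univ.filter (fun c => i ∈ K c ∧ ¬ y ∈ K c),
          ψ c (Function.update (Function.update x i a) y b)
          = ∏ c ∈ Finset.univ.filter (fun c => i ∈ K c ∧ y ∉ K c),
              ψ c (Function.update x i a) := by
        refine Finset.prod_congr rfl fun c hc => ?_
        have hcy : y ∉ K c := (Finset.mem_filter.mp hc).2.2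
        refine hψdep c _ _ fun v hv => ?_
        have hvy : v ≠ y := fun h => hcy (h ▸ hv)
        exact Function.update_of_ne hvy _ _
      have hP3 : ∏ c ∈ Finset.univ.filter (fun c => ¬ i ∈ K c ∧ y ∈ K c),
          ψ c (Function.update (Function.update x i a) y b)
          = ∏ c ∈ Finset.univ.filter (fun c => i ∉ K c ∧ y ∈ K c),
              ψ c (Function.update x y b) := by
        refine Finset.prod_congr rfl fun c hc => ?_
        have hci : i ∉ K c := (Finset.mem_filter.mp hc).2.1
        refine hψdep c _ _ fun v hv => ?_
        have hvi : v ≠ i := fun h => hci (h ▸ hv)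
        by_cases hvy : v = y
        · subst hvy; simp
        · simp [Function.update_of_ne hvy, Function.update_of_ne hvi]
      have hP4 : ∏ c ∈ Finset.univ.filter (fun c => ¬ i ∈ K c ∧ ¬ y ∈ K c),
          ψ c (Function.update (Function.update x i a) y b)
          = ∏ c ∈ Finset.univ.filter (fun c => i ∉ K c ∧ y ∉ K c), ψ c x := by
        refine Finset.prod_congr rfl fun c hc => ?_
        have hci : i ∉ K c := (Finset.mem_filter.mp hc).2.1
        have hcy : y ∉ K c := (Finset.mem_filter.mp hc).2.2
        refine hψdep c _ _ fun v hv => ?_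
        have hvi : v ≠ i := fun h => hci (h ▸ hv)
        have hvy : v ≠ y := fun h => hcy (h ▸ hv)
        simp [Function.update_of_ne hvy, Function.update_of_ne hvi]
      rw [hP2, hP3, hP4]
      ring
    have hZpos : 0 < Z := by
      rw [hZ]
      exact Finset.sum_pos (fun x _ => Finset.prod_pos fun c _ => hψpos c x)
        ⟨x0, Finset.mem_univ _⟩
    have hdpos : ∀ x a, 0 < d x a := fun x a => by
      rw [hd]; exact Finset.prod_pos fun c _ => hψpos c _
    have hepos : ∀ x b, 0 < e x b := fun x b => by
      rw [he]; exact Finset.prod_pos fun c _ => hψpos c _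
    have hfpos : ∀ x a b, 0 < f x a b := fun x a b => by
      rw [hf]; exact Finset.prod_pos fun c _ => hψpos c _
    have hgpos : ∀ x, 0 < g x := fun x => Finset.prod_pos fun c _ => hψpos c _
    set A : (∀ v, S v) → ℝ := fun x => ∑ a : S i, ∑ b : S y, d x a * e x b * f x a b
      with hA
    set B : (∀ v, S v) → ℝ := fun x => ∑ b : S y, d x (x i) * e x b * f x (x i) b
      with hB
    have hApos : ∀ x, 0 < A x := fun x =>
      Finset.sum_pos (fun a _ => Finset.sum_pos
        (fun b _ => mul_pos (mul_pos (hdpos x a) (hepos x b)) (hfpos x a b))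
        Finset.univ_nonempty) Finset.univ_nonempty
    have hBpos : ∀ x, 0 < B x := fun x =>
      Finset.sum_pos
        (fun b _ => mul_pos (mul_pos (hdpos x (x i)) (hepos x b)) (hfpos x (x i) b))
        Finset.univ_nonempty
    have hS1 : ∀ x, (∑ a : S i, ∑ b : S y,
        p (Function.update (Function.update x i a) y b)) = g x / Z * A x := by
      intro x
      rw [hA, Finset.mul_sum]
      refine Finset.sum_congr rfl fun a _ => ?_
      rw [Finset.mul_sum]
      refine Finset.sum_congr rfl fun b _ => ?_
      rw [hfact, key]
      ring
    have hS2 : ∀ x, (∑ b : S y, p (Function.update x y b)) = g x / Z * B x := by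
      intro x
      rw [hB, Finset.mul_sum]
      refine Finset.sum_congr rfl fun b _ => ?_
      have hk := key x (x i) b
      rw [Function.update_eq_self i x] at hk
      rw [hfact, hk]
      ring
    have hlog : ∀ x,
        Real.log (∑ a : S i, ∑ b : S y,
            p (Function.update (Function.update x i a) y b))
          - Real.log (∑ b : S y, p (Function.update x y b))
          = Real.log (A x / B x) := by
      intro x
      rw [hS1, hS2,
        Real.log_mul (ne_of_gt (div_pos (hgpos x) hZpos)) (ne_of_gt (hApos x)),
        Real.log_mul (ne_of_gt (div_pos (hgpos x) hZpos)) (ne_of_gt (hBpos x)),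
        Real.log_div (ne_of_gt (hApos x)) (ne_of_gt (hBpos x))]
      ring
    rw [neg_sub_neg, ← Finset.sum_sub_distrib, ← Finset.sum_neg_distrib]
    refine Finset.sum_congr rfl fun x _ => ?_
    linear_combination (-(p x)) * hlog x
end

section
/- Covered information theorem (matrix form): For a pairwise Markov random field over (X₁,...,X_N, Y) with positive potentials, the covered information H_i^c = H(X_i ∩ Y ∩ (∪_{j≠i} X_j)) defined by inclusion-exclusion satisfies H_i^c = I(X_i;Y) - E_{p}[ log( f(X_i,Y) · (dᵀ F e) / (dᵀ F_y)(F_{x_i}ᵀ e) ) ], where F is the matrix of pairwise potential values f(x_i, y), d and e are the vectors of d(x_i) = ∏_{j∼i, j≠y} ψ(x_i, x_j) and e(y) = ∏_{j∼y, j≠i} ψ(y, x_j) with the remaining variables fixed at their observed values, F_y is the column of F at the observed Y, and F_{x_i} the row at the observed X_i. -/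
/-- covered information theorem, matrix form: for a pairwise
Markov random field over (X₁,...,X_N, Y) (indexed uniformly by `Fin M`, with
`i` the index of X_i and `y` the index of Y) with strictly positive node and
edge potentials, the covered information
`H_i^c = I(X_i;Y) + H(X_i,Y,X_{i⁻}) - H(X_{i⁻},Y) + H(X_{i⁻}) - H(X_i,X_{i⁻})`
satisfies
`H_i^c = I(X_i;Y) - E_p[ log( f(X_i,Y)·(dᵀFe) / ((dᵀF_y)·(F_{x_i}ᵀe)) ) ]`,
where `F` is the matrix of pairwise potentials between coordinates i and y, and
`d`, `e` collect the potentials linking i (resp. y) to the remaining variables,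
fixed at their observed values. -/
theorem covered_information_theorem
    {M : ℕ} {S : Fin M → Type*} [∀ v, Fintype (S v)] [∀ v, DecidableEq (S v)]
    (φ : ∀ s : Fin M, S s → ℝ)                         -- node potentials
    (Φ : ∀ s t : Fin M, S s → S t → ℝ)                 -- pairwise potentials
    (hφpos : ∀ s a, 0 < φ s a)
    (hΦpos : ∀ s t a b, 0 < Φ s t a b)
    (hΦsymm : ∀ s t a b, Φ s t a b = Φ t s b a)
    (Z : ℝ)
    (hZ : Z = ∑ x : ∀ v, S v,
      (∏ s, φ s (x s)) * ∏ s, ∏ t, if s < t then Φ s t (x s) (x t) else 1)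
    (p : (∀ v, S v) → ℝ)
    (hfact : ∀ x, p x =
      ((∏ s, φ s (x s)) * ∏ s, ∏ t, if s < t then Φ s t (x s) (x t) else 1) / Z)
    (i y : Fin M) (hiy : i ≠ y)
    (d : (∀ v, S v) → S i → ℝ) (e : (∀ v, S v) → S y → ℝ)
    (hd : ∀ x a, d x a = φ i a * ∏ j ∈ Finset.univ \ {i, y}, Φ i j a (x j))
    (he : ∀ x b, e x b = φ y b * ∏ j ∈ Finset.univ \ {i, y}, Φ y j b (x j))
    (f : S i → S y → ℝ) (hf : ∀ a b, f a b = Φ i y a b)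
    -- marginals of the pair (X_i, Y) and of X_i, Y separately
    (pXY : S i → S y → ℝ) (pX : S i → ℝ) (pY : S y → ℝ)
    (hpXY : ∀ a b, pXY a b = ∑ x, if x i = a ∧ x y = b then p x else 0)
    (hpX : ∀ a, pX a = ∑ x, if x i = a then p x else 0)
    (hpY : ∀ b, pY b = ∑ x, if x y = b then p x else 0)
    -- mutual information I(X_i; Y)
    (I : ℝ) (hI : I = ∑ a, ∑ b, pXY a b * Real.log (pXY a b / (pX a * pY b))) :
    -- H_i^c defined by inclusion-exclusion:
    I + (-∑ x, p x * Real.log (p x))                                        -- H(X_i,Y,X_{i⁻})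
      - (-∑ x, p x * Real.log (∑ a : S i, p (Function.update x i a)))       -- H(X_{i⁻},Y)
      + (-∑ x, p x * Real.log (∑ a : S i, ∑ b : S y,
          p (Function.update (Function.update x i a) y b)))                 -- H(X_{i⁻})
      - (-∑ x, p x * Real.log (∑ b : S y, p (Function.update x y b)))       -- H(X_i,X_{i⁻})
    = I - ∑ x, p x * Real.log
        (f (x i) (x y) *
          (∑ a : S i, ∑ b : S y, d x a * f a b * e x b) /
          ((∑ a : S i, d x a * f a (x y)) * (∑ b : S y, f (x i) b * e x b))) := by
  classical
  rcases isEmpty_or_nonempty (∀ v, S v) with hemp | hne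
  · simp [Finset.univ_eq_empty]
  obtain ⟨x₀⟩ := hne
  haveI hSne : ∀ v, Nonempty (S v) := fun v => ⟨x₀ v⟩
  have hmem : ∀ j ∈ Finset.univ \ ({i, y} : Finset (Fin M)), j ≠ i ∧ j ≠ y := by
    intro j hj
    simp only [Finset.mem_sdiff, Finset.mem_univ, Finset.mem_insert,
      Finset.mem_singleton, true_and] at hj
    tauto
  have hyu : y ∉ Finset.univ \ ({i, y} : Finset (Fin M)) := by simp
  have hiu : i ∉ insert y (Finset.univ \ ({i, y} : Finset (Fin M))) := by
    simp [hiy]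
  have huniv : (Finset.univ : Finset (Fin M))
      = insert i (insert y (Finset.univ \ ({i, y} : Finset (Fin M)))) := by
    ext s
    simp only [Finset.mem_insert, Finset.mem_sdiff, Finset.mem_univ,
      Finset.mem_singleton, true_and, iff_true]
    tauto
  have hZpos : 0 < Z := by
    rw [hZ]
    refine Finset.sum_pos ?_ Finset.univ_nonempty
    intro x _
    refine mul_pos (Finset.prod_pos fun s _ => hφpos s _) ?_
    refine Finset.prod_pos fun s _ => Finset.prod_pos fun t _ => ?_
    split
    · exact hΦpos _ _ _ _
    · exact one_pos
  -- the factorization of the joint numerator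
  have hfac : ∀ z : ∀ v, S v,
      (∏ s, φ s (z s)) * (∏ s, ∏ t, if s < t then Φ s t (z s) (z t) else 1)
      = (φ i (z i) * ∏ t ∈ Finset.univ \ ({i, y} : Finset (Fin M)), Φ i t (z i) (z t)) *
        Φ i y (z i) (z y) *
        ((φ y (z y) * ∏ t ∈ Finset.univ \ ({i, y} : Finset (Fin M)), Φ y t (z y) (z t)) *
         ((∏ s ∈ Finset.univ \ ({i, y} : Finset (Fin M)), φ s (z s)) *
          ∏ s ∈ Finset.univ \ ({i, y} : Finset (Fin M)),
            ∏ t ∈ Finset.univ \ ({i, y} : Finset (Fin M)),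
              if s < t then Φ s t (z s) (z t) else 1)) := by
    intro z
    have c1 : (if i < i then Φ i i (z i) (z i) else 1) = 1 := if_neg (lt_irrefl i)
    have c2 : (if y < y then Φ y y (z y) (z y) else 1) = 1 := if_neg (lt_irrefl y)
    have c3 : (if i < y then Φ i y (z i) (z y) else 1) *
        (if y < i then Φ y i (z y) (z i) else 1) = Φ i y (z i) (z y) := by
      rcases lt_or_gt_of_ne hiy with h | h
      · rw [if_pos h, if_neg (asymm h), mul_one]
      · rw [if_neg (asymm h), if_pos h, one_mul]
        exact (hΦsymm _ _ _ _).symm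
    have c4 : (∏ t ∈ Finset.univ \ ({i, y} : Finset (Fin M)),
          if i < t then Φ i t (z i) (z t) else 1) *
        (∏ t ∈ Finset.univ \ ({i, y} : Finset (Fin M)),
          if t < i then Φ t i (z t) (z i) else 1)
        = ∏ t ∈ Finset.univ \ ({i, y} : Finset (Fin M)), Φ i t (z i) (z t) := by
      rw [← Finset.prod_mul_distrib]
      refine Finset.prod_congr rfl fun t ht => ?_
      rcases lt_or_gt_of_ne ((hmem t ht).1.symm) with h | h
      · rw [if_pos h, if_neg (asymm h), mul_one]
      · rw [if_neg (asymm h), if_pos h, one_mul]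
        exact (hΦsymm _ _ _ _).symm
    have c5 : (∏ t ∈ Finset.univ \ ({i, y} : Finset (Fin M)),
          if y < t then Φ y t (z y) (z t) else 1) *
        (∏ t ∈ Finset.univ \ ({i, y} : Finset (Fin M)),
          if t < y then Φ t y (z t) (z y) else 1)
        = ∏ t ∈ Finset.univ \ ({i, y} : Finset (Fin M)), Φ y t (z y) (z t) := by
      rw [← Finset.prod_mul_distrib]
      refine Finset.prod_congr rfl fun t ht => ?_
      rcases lt_or_gt_of_ne ((hmem t ht).2.symm) with h | h
      · rw [if_pos h, if_neg (asymm h), mul_one]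
      · rw [if_neg (asymm h), if_pos h, one_mul]
        exact (hΦsymm _ _ _ _).symm
    calc (∏ s, φ s (z s)) * (∏ s, ∏ t, if s < t then Φ s t (z s) (z t) else 1)
        = ((if i < y then Φ i y (z i) (z y) else 1) *
            (if y < i then Φ y i (z y) (z i) else 1)) *
          (((∏ t ∈ Finset.univ \ ({i, y} : Finset (Fin M)),
              if i < t then Φ i t (z i) (z t) else 1) *
            (∏ t ∈ Finset.univ \ ({i, y} : Finset (Fin M)),
              if t < i then Φ t i (z t) (z i) else 1)) *
          (((∏ t ∈ Finset.univ \ ({i, y} : Finset (Fin M)),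
              if y < t then Φ y t (z y) (z t) else 1) *
            (∏ t ∈ Finset.univ \ ({i, y} : Finset (Fin M)),
              if t < y then Φ t y (z t) (z y) else 1)) *
           (φ i (z i) * (φ y (z y) *
            ((∏ s ∈ Finset.univ \ ({i, y} : Finset (Fin M)), φ s (z s)) *
             ∏ s ∈ Finset.univ \ ({i, y} : Finset (Fin M)),
               ∏ t ∈ Finset.univ \ ({i, y} : Finset (Fin M)),
                 if s < t then Φ s t (z s) (z t) else 1))))) := by
          conv_lhs => rw [huniv]
          simp only [Finset.prod_insert hiu, Finset.prod_insert hyu,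
            Finset.prod_mul_distrib, c1, c2]
          ring
      _ = _ := by rw [c3, c4, c5]; ring
  -- the residual factor R
  obtain ⟨R, hRpos, hkey⟩ : ∃ R : (∀ v, S v) → ℝ, (∀ x, 0 < R x) ∧
      ∀ x a b, p (Function.update (Function.update x i a) y b)
        = d x a * f a b * e x b * R x := by
    refine ⟨fun x =>
      ((∏ s ∈ Finset.univ \ ({i, y} : Finset (Fin M)), φ s (x s)) *
       ∏ s ∈ Finset.univ \ ({i, y} : Finset (Fin M)),
         ∏ t ∈ Finset.univ \ ({i, y} : Finset (Fin M)),
           if s < t then Φ s t (x s) (x t) else 1) / Z, fun x => ?_, fun x a b => ?_⟩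
    · refine div_pos (mul_pos (Finset.prod_pos fun s _ => hφpos s _) ?_) hZpos
      refine Finset.prod_pos fun s _ => Finset.prod_pos fun t _ => ?_
      split
      · exact hΦpos _ _ _ _
      · exact one_pos
    · set x' := Function.update (Function.update x i a) y b with hx'def
      have hx'i : x' i = a := by
        rw [hx'def, Function.update_of_ne hiy, Function.update_self]
      have hx'y : x' y = b := by rw [hx'def, Function.update_self]
      have hx'j : ∀ j, j ≠ i → j ≠ y → x' j = x j := by
        intro j hji hjy
        rw [hx'def, Function.update_of_ne hjy, Function.update_of_ne hji]
      have exφ : (∏ s ∈ Finset.univ \ ({i, y} : Finset (Fin M)), φ s (x' s))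
          = ∏ s ∈ Finset.univ \ ({i, y} : Finset (Fin M)), φ s (x s) :=
        Finset.prod_congr rfl fun s hs => by rw [hx'j s (hmem s hs).1 (hmem s hs).2]
      have exi : (∏ t ∈ Finset.univ \ ({i, y} : Finset (Fin M)), Φ i t a (x' t))
          = ∏ t ∈ Finset.univ \ ({i, y} : Finset (Fin M)), Φ i t a (x t) :=
        Finset.prod_congr rfl fun t ht => by rw [hx'j t (hmem t ht).1 (hmem t ht).2]
      have exy : (∏ t ∈ Finset.univ \ ({i, y} : Finset (Fin M)), Φ y t b (x' t))
          = ∏ t ∈ Finset.univ \ ({i, y} : Finset (Fin M)), Φ y t b (x t) :=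
        Finset.prod_congr rfl fun t ht => by rw [hx'j t (hmem t ht).1 (hmem t ht).2]
      have exee : (∏ s ∈ Finset.univ \ ({i, y} : Finset (Fin M)),
            ∏ t ∈ Finset.univ \ ({i, y} : Finset (Fin M)),
              if s < t then Φ s t (x' s) (x' t) else 1)
          = ∏ s ∈ Finset.univ \ ({i, y} : Finset (Fin M)),
              ∏ t ∈ Finset.univ \ ({i, y} : Finset (Fin M)),
                if s < t then Φ s t (x s) (x t) else 1 :=
        Finset.prod_congr rfl fun s hs => Finset.prod_congr rfl fun t ht => by
          rw [hx'j s (hmem s hs).1 (hmem s hs).2, hx'j t (hmem t ht).1 (hmem t ht).2]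
      rw [hfact, hfac x']
      simp only [hx'i, hx'y]
      rw [exφ, exi, exy, exee, hd, he, hf]
      ring
  -- pointwise identities for the conditional marginal sums
  have hpx : ∀ x, p x = d x (x i) * f (x i) (x y) * e x (x y) * R x := by
    intro x
    have h := hkey x (x i) (x y)
    simpa [Function.update_eq_self] using h
  have hA : ∀ x : ∀ v, S v, (∑ a : S i, p (Function.update x i a))
      = (∑ a : S i, d x a * f a (x y)) * (e x (x y) * R x) := by
    intro x
    rw [Finset.sum_mul]
    refine Finset.sum_congr rfl fun a _ => ?_
    have h1 : Function.update x i a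
        = Function.update (Function.update x i a) y (x y) := by
      conv_lhs => rw [← Function.update_eq_self y (Function.update x i a)]
      rw [Function.update_of_ne (Ne.symm hiy)]
    rw [h1, hkey]
    ring
  have hC : ∀ x : ∀ v, S v, (∑ b : S y, p (Function.update x y b))
      = d x (x i) * ((∑ b : S y, f (x i) b * e x b) * R x) := by
    intro x
    have h1 : ∀ b : S y, Function.update x y b
        = Function.update (Function.update x i (x i)) y b := fun b => by
      rw [Function.update_eq_self]
    calc ∑ b : S y, p (Function.update x y b)
        = ∑ b : S y, d x (x i) * (f (x i) b * e x b * R x) :=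
          Finset.sum_congr rfl fun b _ => by rw [h1 b, hkey]; ring
      _ = d x (x i) * ((∑ b : S y, f (x i) b * e x b) * R x) := by
          rw [← Finset.mul_sum, ← Finset.sum_mul]
  have hB : ∀ x : ∀ v, S v,
      (∑ a : S i, ∑ b : S y, p (Function.update (Function.update x i a) y b))
      = (∑ a : S i, ∑ b : S y, d x a * f a b * e x b) * R x := by
    intro x
    rw [Finset.sum_mul]
    refine Finset.sum_congr rfl fun a _ => ?_
    rw [Finset.sum_mul]
    exact Finset.sum_congr rfl fun b _ => hkey x a b
  -- positivity facts
  have hdpos : ∀ x a, 0 < d x a := fun x a => by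
    rw [hd]; exact mul_pos (hφpos _ _) (Finset.prod_pos fun j _ => hΦpos _ _ _ _)
  have hepos : ∀ x b, 0 < e x b := fun x b => by
    rw [he]; exact mul_pos (hφpos _ _) (Finset.prod_pos fun j _ => hΦpos _ _ _ _)
  have hfpos : ∀ a b, 0 < f a b := fun a b => by rw [hf]; exact hΦpos _ _ _ _
  -- pointwise log identity
  have main : ∀ x ∈ (Finset.univ : Finset (∀ v, S v)),
      p x * Real.log
        (f (x i) (x y) *
          (∑ a : S i, ∑ b : S y, d x a * f a b * e x b) /
          ((∑ a : S i, d x a * f a (x y)) * (∑ b : S y, f (x i) b * e x b)))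
      = p x * Real.log (p x)
        + p x * Real.log (∑ a : S i, ∑ b : S y,
            p (Function.update (Function.update x i a) y b))
        - p x * Real.log (∑ a : S i, p (Function.update x i a))
        - p x * Real.log (∑ b : S y, p (Function.update x y b)) := by
    intro x _
    have hd0 := hdpos x (x i)
    have hf0 := hfpos (x i) (x y)
    have he0 := hepos x (x y)
    have hr := hRpos x
    have hA' : 0 < ∑ a : S i, d x a * f a (x y) :=
      Finset.sum_pos (fun a _ => mul_pos (hdpos x a) (hfpos a (x y)))
        Finset.univ_nonempty
    have hB' : 0 < ∑ a : S i, ∑ b : S y, d x a * f a b * e x b :=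
      Finset.sum_pos (fun a _ => Finset.sum_pos
        (fun b _ => mul_pos (mul_pos (hdpos x a) (hfpos a b)) (hepos x b))
        Finset.univ_nonempty) Finset.univ_nonempty
    have hC' : 0 < ∑ b : S y, f (x i) b * e x b :=
      Finset.sum_pos (fun b _ => mul_pos (hfpos (x i) b) (hepos x b))
        Finset.univ_nonempty
    rw [hA x, hB x, hC x, hpx x]
    rw [Real.log_div (mul_pos hf0 hB').ne' (mul_pos hA' hC').ne',
      Real.log_mul hf0.ne' hB'.ne',
      Real.log_mul hA'.ne' hC'.ne',
      Real.log_mul (mul_pos (mul_pos hd0 hf0) he0).ne' hr.ne',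
      Real.log_mul (mul_pos hd0 hf0).ne' he0.ne',
      Real.log_mul hd0.ne' hf0.ne',
      Real.log_mul hB'.ne' hr.ne',
      Real.log_mul hA'.ne' (mul_pos he0 hr).ne',
      Real.log_mul he0.ne' hr.ne',
      Real.log_mul hd0.ne' (mul_pos hC' hr).ne',
      Real.log_mul hC'.ne' hr.ne']
    ring
  rw [Finset.sum_congr rfl main]
  rw [Finset.sum_sub_distrib, Finset.sum_sub_distrib, Finset.sum_add_distrib]
  ring
end
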